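/- arXiv:1406.4753 — 6 statements merged into one kernel-verified Lean document; each statement's English description precedes it below -/
import Mathlib

section
/- Let (U, W, B) be a linear system over ℂ. For any finite-dimensional subspaces U_0 ⊆ U and W_0 ⊆ W there exist finite-dimensional subspaces U_f ⊆ U and W_f ⊆ W with U_0 ⊆ U_f, W_0 ⊆ W_f, such that the restriction of B to U_f × W_f is nondegenerate (i.e. (U_f, W_f) is a finite-dimensional subsystem of (U, W)). -/
/-!
Since `U₀` is finite-dimensional, hence Artinian, finitely many `w` already separate its points;
adjoining them to `W₀` gives `W_f` with `B` left-nondegenerate on `U₀ × W_f`, and the same argument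
with `B` flipped gives `U₁ ⊇ U₀` with `B` right-nondegenerate on `U₁ × W_f`. The left radical `L` of
`U₁ × W_f` meets `U₀` trivially, so in the modular lattice of subspaces `U₀` extends to a complement
`U_f` of `L` in `U₁`. Then `U_f` meets the radical trivially, while `U_f + L = U₁` annihilates no
nonzero `w ∈ W_f`.
-/

open Submodule

theorem exists_le_disjoint_sup_eq {α : Type*} [Lattice α] [BoundedOrder α] [IsModularLattice α]
    [ComplementedLattice α] {a b c : α} (hac : a ≤ c) (hbc : b ≤ c) (hab : Disjoint a b) :
    ∃ x, a ≤ x ∧ Disjoint x b ∧ x ⊔ b = c := by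
  obtain ⟨x, hax, hx⟩ := Disjoint.exists_isCompl (a := (⟨a, hac⟩ : Set.Iic c)) (b := ⟨b, hbc⟩)
    (Set.Iic.disjoint_iff.2 hab)
  exact ⟨x, hax, Set.Iic.isCompl_iff.1 hx⟩

namespace LinearMap

section Artinian

variable {R M N P : Type*} [CommSemiring R] [AddCommMonoid M] [Module R M] [AddCommMonoid N]
  [Module R N] [AddCommMonoid P] [Module R P] {B : M →ₗ[R] N →ₗ[R] P}

theorem SeparatingLeft.exists_finset_of_isArtinian (hB : B.SeparatingLeft) (X : Submodule R M)
    [IsArtinian R X] : ∃ t : Finset N, ∀ x ∈ X, (∀ y ∈ t, B x y = 0) → x = 0 := by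
  obtain ⟨t, ht⟩ := Finset.exists_inf_le fun y ↦ ker ((B.flip y).domRestrict X)
  refine ⟨t, fun x hx hxt ↦ ?_⟩
  have hxt : (⟨x, hx⟩ : X) ∈ t.inf fun y ↦ ker ((B.flip y).domRestrict X) :=
    mem_finsetInf.2 fun y hy ↦ hxt y hy
  simpa using hB x fun y ↦ ht y hxt

end Artinian

variable {K M N P : Type*} [Field K] [AddCommGroup M] [Module K M] [AddCommGroup N]
  [Module K N] [AddCommGroup P] [Module K P] {B : M →ₗ[K] N →ₗ[K] P}

theorem SeparatingLeft.exists_le_finiteDimensional_separating (hB : B.SeparatingLeft)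
    (X : Submodule K M) [FiniteDimensional K X] (Y : Submodule K N) [FiniteDimensional K Y] :
    ∃ Y' : Submodule K N, Y ≤ Y' ∧ FiniteDimensional K Y' ∧
      ∀ x ∈ X, (∀ y ∈ Y', B x y = 0) → x = 0 := by
  obtain ⟨t, ht⟩ := hB.exists_finset_of_isArtinian X
  refine ⟨Y ⊔ span K t, le_sup_left, inferInstance, fun x hx hxY ↦ ht x hx fun y hy ↦ ?_⟩
  exact hxY y (mem_sup_right (subset_span hy))

theorem exists_nondegenerate_between {X X₁ : Submodule K M} {Y : Submodule K N}
    (hXX₁ : X ≤ X₁) (hX : ∀ x ∈ X, (∀ y ∈ Y, B x y = 0) → x = 0)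
    (hX₁ : ∀ y ∈ Y, (∀ x ∈ X₁, B x y = 0) → y = 0) :
    ∃ X' : Submodule K M, X ≤ X' ∧ X' ≤ X₁ ∧
      (∀ x ∈ X', (∀ y ∈ Y, B x y = 0) → x = 0) ∧ (∀ y ∈ Y, (∀ x ∈ X', B x y = 0) → y = 0) := by
  set L := X₁ ⊓ ker (B.compl₂ Y.subtype)
  have mem_L {x : M} : x ∈ L ↔ x ∈ X₁ ∧ ∀ y ∈ Y, B x y = 0 := by
    simp [L, LinearMap.ext_iff]
  have hXL : Disjoint X L := disjoint_def.2 fun x hx hxL ↦ hX x hx (mem_L.1 hxL).2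
  obtain ⟨X', hXX', hX'L, hX'L_sup⟩ := exists_le_disjoint_sup_eq hXX₁ inf_le_left hXL
  refine ⟨X', hXX', hX'L_sup ▸ le_sup_left, fun x hx hxY ↦ ?_, fun y hy hyX' ↦ ?_⟩
  · exact disjoint_def.1 hX'L x hx (mem_L.2 ⟨hX'L_sup ▸ mem_sup_left hx, hxY⟩)
  · refine hX₁ y hy fun x hx ↦ ?_
    have : X' ⊔ L ≤ ker (B.flip y) := sup_le hyX' fun x hx ↦ (mem_L.1 hx).2 y hy
    exact this (hX'L_sup ▸ hx)

end LinearMap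

/-- Let `(U, W, B)` be a linear system over `ℂ`.  Any pair of finite-dimensional subspaces
`U₀ ⊆ U`, `W₀ ⊆ W` is contained in a finite-dimensional subsystem `(U_f, W_f)`, i.e. in
finite-dimensional subspaces on which the restriction of `B` is nondegenerate. -/
theorem stmt_1 {U W : Type*} [AddCommGroup U] [Module ℂ U] [AddCommGroup W] [Module ℂ W]
    (B : U →ₗ[ℂ] W →ₗ[ℂ] ℂ)
    (hB1 : ∀ u : U, (∀ w : W, B u w = 0) → u = 0)
    (hB2 : ∀ w : W, (∀ u : U, B u w = 0) → w = 0)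
    (U0 : Submodule ℂ U) (W0 : Submodule ℂ W)
    (hU0 : FiniteDimensional ℂ U0) (hW0 : FiniteDimensional ℂ W0) :
    ∃ (Uf : Submodule ℂ U) (Wf : Submodule ℂ W),
      U0 ≤ Uf ∧ W0 ≤ Wf ∧ FiniteDimensional ℂ Uf ∧ FiniteDimensional ℂ Wf ∧
      (∀ u ∈ Uf, (∀ w ∈ Wf, B u w = 0) → u = 0) ∧
      (∀ w ∈ Wf, (∀ u ∈ Uf, B u w = 0) → w = 0) := by
  obtain ⟨Wf, hW0Wf, hWf, hU0Wf⟩ :=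
    LinearMap.SeparatingLeft.exists_le_finiteDimensional_separating hB1 U0 W0
  obtain ⟨U1, hU0U1, hU1, hU1Wf⟩ :=
    LinearMap.SeparatingLeft.exists_le_finiteDimensional_separating (B := B.flip) hB2 Wf U0
  obtain ⟨Uf, hU0Uf, hUfU1, hleft, hright⟩ :=
    LinearMap.exists_nondegenerate_between hU0U1 hU0Wf hU1Wf
  exact ⟨Uf, Wf, hU0Uf, hW0Wf, Submodule.finiteDimensional_of_le hUfU1, hWf, hleft, hright⟩
end

section
/- Let (U, W, B) be a linear system over ℂ with 2 ≤ Module.rank ℂ U. Then the Lie algebra sl_{U,W} := ι(ker T) is a simple Lie algebra: it is non-abelian and its only Lie ideals are the zero ideal and the whole algebra. -/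
open TensorProduct

attribute [local instance 100] LieRing.ofAssociativeRing

variable {U W : Type*} [AddCommGroup U] [Module ℂ U] [AddCommGroup W] [Module ℂ W]

/-- The linear map `ι : U ⊗ W → End ℂ U` determined by `ι(u ⊗ w)(x) = B x w • u`. -/
noncomputable def iotaMap (B : U →ₗ[ℂ] W →ₗ[ℂ] ℂ) :
    U ⊗[ℂ] W →ₗ[ℂ] Module.End ℂ U :=
  (dualTensorHom ℂ U U).comp ((TensorProduct.map B.flip LinearMap.id).comp
    (TensorProduct.comm ℂ U W).toLinearMap)

/-- The defining property of `iotaMap`. -/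
theorem iotaMap_apply (B : U →ₗ[ℂ] W →ₗ[ℂ] ℂ) (u x : U) (w : W) :
    iotaMap B (u ⊗ₜ w) x = B x w • u := by
  simp [iotaMap]

/-- The linear map `T : U ⊗ W → ℂ` determined by `T(u ⊗ w) = B u w`. -/
noncomputable def Tmap (B : U →ₗ[ℂ] W →ₗ[ℂ] ℂ) : U ⊗[ℂ] W →ₗ[ℂ] ℂ :=
  TensorProduct.lift B

theorem Tmap_apply (B : U →ₗ[ℂ] W →ₗ[ℂ] ℂ) (u : U) (w : W) :
    Tmap B (u ⊗ₜ w) = B u w := rfl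

theorem bracket_mem (B : U →ₗ[ℂ] W →ₗ[ℂ] ℂ) (s t : U ⊗[ℂ] W) :
    ⁅iotaMap B s, iotaMap B t⁆ ∈ Submodule.map (iotaMap B) (LinearMap.ker (Tmap B)) := by
  induction s using TensorProduct.induction_on with
  | zero => simp
  | tmul u w =>
    induction t using TensorProduct.induction_on with
    | zero => simp
    | tmul u' w' =>
      refine ⟨B u' w • u ⊗ₜ w' - B u w' • u' ⊗ₜ w, ?_, ?_⟩
      · simp only [SetLike.mem_coe, LinearMap.mem_ker, map_sub, map_smul, Tmap_apply,
          smul_eq_mul]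
        ring
      · ext x
        rw [Ring.lie_def]
        simp only [map_sub, map_smul, LinearMap.sub_apply, LinearMap.smul_apply,
          Module.End.mul_apply, iotaMap_apply, map_smul, smul_eq_mul]
        module
    | add a b ha hb =>
      rw [map_add, lie_add]
      exact Submodule.add_mem _ ha hb
  | add a b ha hb =>
    rw [map_add, add_lie]
    exact Submodule.add_mem _ ha hb

/-- The Lie algebra `sl_{U,W} = ι(ker T)`, a Lie subalgebra of `End ℂ U`. -/
noncomputable def slSub (B : U →ₗ[ℂ] W →ₗ[ℂ] ℂ) :
    LieSubalgebra ℂ (Module.End ℂ U) :=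
  { Submodule.map (iotaMap B) (LinearMap.ker (Tmap B)) with
    lie_mem' := by
      intro x y hx hy
      obtain ⟨s, -, rfl⟩ := hx
      obtain ⟨t, -, rfl⟩ := hy
      exact bracket_mem B s t }

/-!
Write `E(u, w) = ι(u ⊗ w)` for the rank one operator `x ↦ B x w • u`; it lies in `sl_{U,W}`
whenever `B u w = 0`, and then `ad(E)² x = -2 B (x u) w • E`.

A nonzero `x` in an ideal is not a scalar, since `ι(t)` has finite rank and trace `T(t) = 0`.
By nondegeneracy, an endomorphism with `B u w = 0 → B (x u) w = 0` maps every vector to a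
multiple of itself, so it is scalar; hence `B (x u) w ≠ 0` for some isotropic pair and `ad(E)²`
puts `E(u, w)` into the ideal. Bracketing with further isotropic `E`'s replaces either factor, so
the ideal contains every isotropic `E(u', w')`; these span `sl_{U,W}` because, once
`B u₁ w₁ = 1`, the isotropic pure tensors span `ker T`. For `B uᵢ wⱼ = δᵢⱼ` (available as
`dim U ≥ 2`), `⁅E(u₁, w₂), E(u₂, w₁)⁆ = E(u₁, w₁) - E(u₂, w₂) ≠ 0`.
-/
theorem LinearMap.exists_eq_smul_of_ker_le_ker {𝕜 E : Type*} [Field 𝕜] [AddCommGroup E]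
    [Module 𝕜 E] {f g : E →ₗ[𝕜] 𝕜} (h : LinearMap.ker f ≤ LinearMap.ker g) :
    ∃ c : 𝕜, g = c • f := by
  have hg : g ∈ Submodule.span 𝕜 (Set.range fun _ : Unit => f) :=
    mem_span_of_iInf_ker_le_ker (by simpa using h)
  obtain ⟨c, hc⟩ := Submodule.mem_span_singleton.mp (by simpa using hg)
  exact ⟨c, hc.symm⟩

theorem finiteDimensional_range_iotaMap (B : U →ₗ[ℂ] W →ₗ[ℂ] ℂ) (t : U ⊗[ℂ] W) :
    FiniteDimensional ℂ (LinearMap.range (iotaMap B t)) := by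
  induction t using TensorProduct.induction_on with
  | zero => exact Submodule.finiteDimensional_of_le (S₂ := ⊥) (by simp)
  | tmul u w =>
    refine Submodule.finiteDimensional_of_le (S₂ := ℂ ∙ u) ?_
    rintro _ ⟨x, rfl⟩
    rw [iotaMap_apply]
    exact Submodule.smul_mem _ _ (Submodule.mem_span_singleton_self u)
  | add s t hs ht =>
    rw [map_add]
    exact Submodule.finiteDimensional_of_le (LinearMap.range_add_le _ _)

theorem trace_iotaMap (B : U →ₗ[ℂ] W →ₗ[ℂ] ℂ) [FiniteDimensional ℂ U] (t : U ⊗[ℂ] W) :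
    LinearMap.trace ℂ U (iotaMap B t) = Tmap B t := by
  induction t using TensorProduct.induction_on with
  | zero => simp
  | tmul u w =>
    have h : iotaMap B (u ⊗ₜ w) = (B.flip w).smulRight u := by ext; simp [iotaMap_apply]
    simp [h, Tmap_apply]
  | add s t hs ht => simp [hs, ht]

noncomputable def rankOne (B : U →ₗ[ℂ] W →ₗ[ℂ] ℂ) (u : U) (w : W) : Module.End ℂ U :=
  iotaMap B (u ⊗ₜ w)

noncomputable def isotropicSpan (B : U →ₗ[ℂ] W →ₗ[ℂ] ℂ) : Submodule ℂ (U ⊗[ℂ] W) :=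
  Submodule.span ℂ {t | ∃ u w, B u w = 0 ∧ u ⊗ₜ w = t}

section

variable {B : U →ₗ[ℂ] W →ₗ[ℂ] ℂ} {J : Submodule ℂ (Module.End ℂ U)}

theorem exists_eq_smul_of_ker_apply_le_ker_apply (hB : ∀ u : U, (∀ w : W, B u w = 0) → u = 0)
    {u p : U} (h : LinearMap.ker (B u) ≤ LinearMap.ker (B p)) : ∃ c : ℂ, p = c • u := by
  obtain ⟨c, hc⟩ := LinearMap.exists_eq_smul_of_ker_le_ker h
  refine ⟨c, sub_eq_zero.mp (hB _ fun w => ?_)⟩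
  simpa [sub_eq_zero] using LinearMap.congr_fun hc w

theorem exists_eq_smul_one_of_ker_le_ker (hB : ∀ u : U, (∀ w : W, B u w = 0) → u = 0)
    (x : Module.End ℂ U) (h : ∀ u, LinearMap.ker (B u) ≤ LinearMap.ker (B (x u))) :
    ∃ c : ℂ, x = c • 1 := by
  refine LinearMap.exists_eq_smul_id_of_forall_notLinearIndependent fun u => ?_
  obtain ⟨c, hc⟩ := exists_eq_smul_of_ker_apply_le_ker_apply hB (h u)
  intro hli
  simpa using (LinearIndependent.pair_iff.mp hli c (-1) (by simp [hc])).2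

theorem exists_apply_eq_one (hB : ∀ u : U, (∀ w : W, B u w = 0) → u = 0) {u : U}
    (hu : u ≠ 0) : ∃ w, B u w = 1 := by
  obtain ⟨w, hw⟩ : ∃ w, B u w ≠ 0 := by
    by_contra! h
    exact hu (hB u h)
  exact ⟨(B u w)⁻¹ • w, by simp [hw]⟩

theorem exists_biorthogonal_pairs (hB : ∀ u : U, (∀ w : W, B u w = 0) → u = 0)
    (hrank : 2 ≤ Module.rank ℂ U) :
    ∃ (u₁ u₂ : U) (w₁ w₂ : W), B u₁ w₁ = 1 ∧ B u₂ w₂ = 1 ∧ B u₁ w₂ = 0 ∧ B u₂ w₁ = 0 := by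
  have hnot : ¬ Module.rank ℂ U ≤ 1 := fun h => by
    have := hrank.trans h
    norm_num at this
  simp only [rank_le_one_iff, not_exists, not_forall] at hnot
  obtain ⟨u₁, hu₁⟩ := hnot 0
  obtain ⟨v, hv⟩ := hnot u₁
  obtain ⟨w₁, h11⟩ := exists_apply_eq_one hB (u := u₁) (by simpa [eq_comm] using hu₁ 0)
  set u₂ := v - B v w₁ • u₁
  have h21 : B u₂ w₁ = 0 := by simp [u₂, h11]
  obtain ⟨w, hw⟩ := exists_apply_eq_one hB (u := u₂) (sub_ne_zero.mpr fun h => hv _ h.symm)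
  exact ⟨u₁, u₂, w₁, w - B u₁ w • w₁, h11, by simp [hw, h21], by simp [h11], h21⟩

@[simp]
theorem rankOne_apply (u x : U) (w : W) : rankOne B u w x = B x w • u :=
  iotaMap_apply B u x w

theorem rankOne_mem_slSub {u : U} {w : W} (h : B u w = 0) : rankOne B u w ∈ slSub B :=
  ⟨u ⊗ₜ w, h, rfl⟩

theorem lie_rankOne_rankOne (a c : U) (b d : W) :
    ⁅rankOne B a b, rankOne B c d⁆ = B c b • rankOne B a d - B a d • rankOne B c b := by
  ext x
  simp only [Ring.lie_def, LinearMap.sub_apply, LinearMap.smul_apply, Module.End.mul_apply,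
    rankOne_apply, map_smul]
  module

theorem lie_rankOne_lie_rankOne {u : U} {w : W} (h : B u w = 0) (x : Module.End ℂ U) :
    ⁅rankOne B u w, ⁅rankOne B u w, x⁆⁆ = (-2 * B (x u) w) • rankOne B u w := by
  ext y
  simp only [Ring.lie_def, LinearMap.sub_apply, LinearMap.smul_apply, Module.End.mul_apply,
    map_sub, rankOne_apply, map_smul, h]
  module

theorem tmul_mem_isotropicSpan {u : U} {w : W} (h : B u w = 0) : u ⊗ₜ w ∈ isotropicSpan B :=
  Submodule.subset_span ⟨u, w, h, rfl⟩

theorem tmul_sub_smul_mem_isotropicSpan {u₁ : U} {w₁ : W} (h11 : B u₁ w₁ = 1) (u : U) (w : W) :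
    u ⊗ₜ w - B u w • u₁ ⊗ₜ w₁ ∈ isotropicSpan B := by
  obtain ⟨u', a, hu', rfl⟩ : ∃ u' a, B u' w₁ = 0 ∧ u = u' + a • u₁ :=
    ⟨u - B u w₁ • u₁, B u w₁, by simp [h11], by abel⟩
  obtain ⟨w', b, hw', rfl⟩ : ∃ w' b, B u₁ w' = 0 ∧ w = w' + b • w₁ :=
    ⟨w - B u₁ w • w₁, B u₁ w, by simp [h11], by abel⟩
  set d := B u' w'
  have hB : B (u' + a • u₁) (w' + b • w₁) = d + a * b := by simp [d, hu', hw', h11]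
  have hdecomp : (u' + a • u₁) ⊗ₜ[ℂ] (w' + b • w₁) - (d + a * b) • u₁ ⊗ₜ[ℂ] w₁ =
      (u' + d • u₁) ⊗ₜ (w' - w₁) + (1 + b) • u' ⊗ₜ w₁ + (a - d) • u₁ ⊗ₜ w' := by
    simp only [add_tmul, tmul_add, tmul_sub, ← smul_tmul', tmul_smul]
    module
  rw [hB, hdecomp]
  refine add_mem (add_mem (tmul_mem_isotropicSpan ?_) (Submodule.smul_mem _ _
    (tmul_mem_isotropicSpan hu'))) (Submodule.smul_mem _ _ (tmul_mem_isotropicSpan hw'))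
  simp [d, hu', hw', h11]

theorem ker_Tmap_le_isotropicSpan {u₁ : U} {w₁ : W} (h11 : B u₁ w₁ = 1) :
    LinearMap.ker (Tmap B) ≤ isotropicSpan B := by
  have key (t : U ⊗[ℂ] W) : t - Tmap B t • u₁ ⊗ₜ w₁ ∈ isotropicSpan B := by
    induction t using TensorProduct.induction_on with
    | zero => simp
    | tmul u w => exact tmul_sub_smul_mem_isotropicSpan h11 u w
    | add s t hs ht => simpa only [map_add, add_smul, add_sub_add_comm] using add_mem hs ht
  intro t ht
  simpa [LinearMap.mem_ker.mp ht] using key t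

theorem eq_zero_of_iotaMap_eq_smul_one [Nontrivial U] {t : U ⊗[ℂ] W} (ht : Tmap B t = 0)
    {c : ℂ} (h : iotaMap B t = c • 1) : c = 0 := by
  by_contra hc
  have hrange : LinearMap.range (iotaMap B t) = ⊤ := by
    refine LinearMap.range_eq_top.mpr fun x => ⟨c⁻¹ • x, ?_⟩
    simp [h, hc]
  have := finiteDimensional_range_iotaMap B t
  have : FiniteDimensional ℂ U := by
    rw [hrange] at this
    exact Module.Finite.equiv Submodule.topEquiv
  have htrace := trace_iotaMap B t
  rw [h, ht, map_smul, LinearMap.trace_one, smul_eq_mul] at htrace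
  exact Module.finrank_pos.ne' (by exact_mod_cast (mul_eq_zero.mp htrace).resolve_left hc)

theorem rankOne_mem_of_apply_ne_zero (hJ : ∀ y ∈ slSub B, ∀ z ∈ J, ⁅y, z⁆ ∈ J)
    {z : Module.End ℂ U} (hz : z ∈ J) {u : U} {w : W} (huw : B u w = 0)
    (h : B (z u) w ≠ 0) : rankOne B u w ∈ J := by
  have hE := rankOne_mem_slSub huw
  have h2 := hJ _ hE _ (hJ _ hE _ hz)
  rw [lie_rankOne_lie_rankOne huw] at h2
  exact (Submodule.smul_mem_iff _ (mul_ne_zero (by norm_num) h)).mp h2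

theorem rankOne_mem_of_rankOne_mem_same_left (hJ : ∀ y ∈ slSub B, ∀ z ∈ J, ⁅y, z⁆ ∈ J)
    {p : U} {q w : W} (hq : B.flip q ≠ 0) (hpq : rankOne B p q ∈ J) (hpw : B p w = 0) :
    rankOne B p w ∈ J := by
  by_cases hker : LinearMap.ker (B.flip w) ≤ LinearMap.ker (B.flip q)
  · obtain ⟨c, hc⟩ := LinearMap.exists_eq_smul_of_ker_le_ker hker
    have hc0 : c ≠ 0 := by
      rintro rfl
      exact hq (by simpa using hc)
    have hE : rankOne B p q = c • rankOne B p w := by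
      ext x
      have hx : B x q = c * B x w := by simpa using LinearMap.congr_fun hc x
      simp [hx, mul_smul]
    rwa [hE, Submodule.smul_mem_iff _ hc0] at hpq
  · obtain ⟨a, haw, haq⟩ := SetLike.not_le_iff_exists.mp hker
    have h2 := hJ _ (rankOne_mem_slSub haw) _ hpq
    rw [lie_rankOne_rankOne, hpw, zero_smul, zero_sub, neg_mem_iff] at h2
    exact (Submodule.smul_mem_iff _ haq).mp h2

theorem rankOne_mem_of_rankOne_mem_same_right (hB : ∀ u : U, (∀ w : W, B u w = 0) → u = 0)
    (hJ : ∀ y ∈ slSub B, ∀ z ∈ J, ⁅y, z⁆ ∈ J)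
    {p u : U} {q : W} (hp : p ≠ 0) (hpq : rankOne B p q ∈ J) (huq : B u q = 0) :
    rankOne B u q ∈ J := by
  by_cases hker : LinearMap.ker (B u) ≤ LinearMap.ker (B p)
  · obtain ⟨c, rfl⟩ := exists_eq_smul_of_ker_apply_le_ker_apply hB hker
    have hc0 : c ≠ 0 := by
      rintro rfl
      exact hp (zero_smul _ _)
    rwa [rankOne, ← smul_tmul', map_smul, ← rankOne, Submodule.smul_mem_iff _ hc0] at hpq
  · obtain ⟨b, hub, hpb⟩ := SetLike.not_le_iff_exists.mp hker
    have h2 := hJ _ (rankOne_mem_slSub hub) _ hpq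
    rw [lie_rankOne_rankOne, huq, zero_smul, sub_zero] at h2
    exact (Submodule.smul_mem_iff _ hpb).mp h2

theorem rankOne_mem_of_rankOne_mem (hB : ∀ u : U, (∀ w : W, B u w = 0) → u = 0)
    (hJ : ∀ y ∈ slSub B, ∀ z ∈ J, ⁅y, z⁆ ∈ J)
    {p : U} {q : W} (hp : p ≠ 0) (hq : B.flip q ≠ 0) (hpq : rankOne B p q ∈ J)
    {u : U} {w : W} (huw : B u w = 0) : rankOne B u w ∈ J := by
  by_cases huq : B u q = 0
  · exact rankOne_mem_of_rankOne_mem_same_left hJ hq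
      (rankOne_mem_of_rankOne_mem_same_right hB hJ hp hpq huq) huw
  by_cases hpw : B p w = 0
  · exact rankOne_mem_of_rankOne_mem_same_right hB hJ hp
      (rankOne_mem_of_rankOne_mem_same_left hJ hq hpq hpw) huw
  exact rankOne_mem_of_apply_ne_zero hJ hpq huw (by simpa using mul_ne_zero huq hpw)

theorem slSub_le_of_mem (hB : ∀ u : U, (∀ w : W, B u w = 0) → u = 0)
    (hJ : ∀ y ∈ slSub B, ∀ z ∈ J, ⁅y, z⁆ ∈ J) {u₁ : U} {w₁ : W} (h11 : B u₁ w₁ = 1)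
    {x : Module.End ℂ U} (hxJ : x ∈ J) (hx : x ∈ slSub B) (hx0 : x ≠ 0) :
    (slSub B : Submodule ℂ (Module.End ℂ U)) ≤ J := by
  have : Nontrivial U := nontrivial_of_ne u₁ 0 fun h => by simp [h] at h11
  obtain ⟨u, w, huw, hxuw⟩ : ∃ u w, B u w = 0 ∧ B (x u) w ≠ 0 := by
    by_contra! hcon
    obtain ⟨c, rfl⟩ := exists_eq_smul_one_of_ker_le_ker hB x fun u w => hcon u w
    obtain ⟨t, ht, hxt⟩ := hx
    exact hx0 (by rw [eq_zero_of_iotaMap_eq_smul_one ht hxt, zero_smul])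
  have hu : u ≠ 0 := by
    rintro rfl
    simp at hxuw
  have hw : B.flip w ≠ 0 := fun h => hxuw (by simpa using LinearMap.congr_fun h (x u))
  have hspan : isotropicSpan B ≤ J.comap (iotaMap B) := by
    rw [isotropicSpan, Submodule.span_le]
    rintro _ ⟨u', w', h', rfl⟩
    exact rankOne_mem_of_rankOne_mem hB hJ hu hw
      (rankOne_mem_of_apply_ne_zero hJ hxJ huw hxuw) h'
  rintro y ⟨t, ht, rfl⟩
  exact hspan (ker_Tmap_le_isotropicSpan h11 ht)

theorem lieIdeal_eq_bot_or_eq_top (hB : ∀ u : U, (∀ w : W, B u w = 0) → u = 0)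
    {u₁ : U} {w₁ : W} (h11 : B u₁ w₁ = 1) (I : LieIdeal ℂ (slSub B)) : I = ⊥ ∨ I = ⊤ := by
  refine or_iff_not_imp_left.mpr fun hI => ?_
  obtain ⟨x, hxI, hx0⟩ := (Submodule.ne_bot_iff I.toSubmodule).mp
    (by rwa [Ne, LieSubmodule.toSubmodule_eq_bot])
  let J : Submodule ℂ (Module.End ℂ U) :=
    (I : Submodule ℂ (slSub B)).map (slSub B : Submodule ℂ (Module.End ℂ U)).subtype
  have hJ : ∀ y ∈ slSub B, ∀ z ∈ J, ⁅y, z⁆ ∈ J := by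
    rintro y hy _ ⟨m, hm, rfl⟩
    exact ⟨⁅⟨y, hy⟩, m⁆, I.lie_mem hm, rfl⟩
  have hle := slSub_le_of_mem hB hJ h11 ⟨x, hxI, rfl⟩ x.2 (by simpa using hx0)
  rw [← LieSubmodule.toSubmodule_eq_top, Submodule.eq_top_iff']
  intro y
  obtain ⟨m, hm, hmy⟩ := hle y.2
  rwa [← Subtype.ext hmy]

theorem not_isLieAbelian_slSub {u₁ u₂ : U} {w₁ w₂ : W}
    (h11 : B u₁ w₁ = 1) (h22 : B u₂ w₂ = 1) (h12 : B u₁ w₂ = 0) (h21 : B u₂ w₁ = 0) :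
    ¬ IsLieAbelian (slSub B) := by
  intro hab
  have h := congrArg Subtype.val
    (hab.trivial ⟨_, rankOne_mem_slSub h12⟩ ⟨_, rankOne_mem_slSub h21⟩)
  rw [LieSubalgebra.coe_bracket, lie_rankOne_rankOne, h22, h11] at h
  have hu₁ := LinearMap.congr_fun h u₁
  simp [h11, h12] at hu₁
  simp [hu₁] at h11

end

theorem stmt_2_general (B : U →ₗ[ℂ] W →ₗ[ℂ] ℂ)
    (hB1 : ∀ u : U, (∀ w : W, B u w = 0) → u = 0)
    (hrank : 2 ≤ Module.rank ℂ U) :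
    LieAlgebra.IsSimple ℂ ↥(slSub B) := by
  obtain ⟨u₁, u₂, w₁, w₂, h11, h22, h12, h21⟩ := exists_biorthogonal_pairs hB1 hrank
  exact ⟨lieIdeal_eq_bot_or_eq_top hB1 h11, not_isLieAbelian_slSub h11 h22 h12 h21⟩

/-- For a linear system `(U, W, B)` with `2 ≤ dim U`, the Lie algebra
`sl_{U,W} = ι(ker T)` is closed under the commutator bracket and is a simple Lie
algebra: it is non-abelian and its only Lie ideals are `⊥` and `⊤`. -/
theorem stmt_2 (B : U →ₗ[ℂ] W →ₗ[ℂ] ℂ)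
    (hB1 : ∀ u : U, (∀ w : W, B u w = 0) → u = 0)
    (hB2 : ∀ w : W, (∀ u : U, B u w = 0) → w = 0)
    (hrank : 2 ≤ Module.rank ℂ U) :
    LieAlgebra.IsSimple ℂ ↥(slSub B) :=
  stmt_2_general B hB1 hrank
end

section
/- Let (U, W, B) be a linear system over ℂ. Then the commutator ideal ⁅gl_{U,W}, gl_{U,W}⁆ (the span of all commutators φψ − ψφ with φ, ψ in the range of ι) equals sl_{U,W} = ι(ker T) as subspaces of End_ℂ(U). -/
open TensorProduct

variable {U W : Type*} [AddCommGroup U] [Module ℂ U] [AddCommGroup W] [Module ℂ W]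

/-!
Composition in `gl_{U,W}` is `ι(u ⊗ w) ∘ ι(u' ⊗ w') = B(u', w) • ι(u ⊗ w')`, so
`[ι s, ι t] = ι(r(s, t) - r(t, s))` for `r(s, t) = (ι s ⊗ 1) t`, and `T(r(s, t)) = T(r(t, s))`
puts commutators in `ι(ker T)`. Conversely, if `B e f ≠ 0` then
`[ι(u ⊗ f), ι(e ⊗ w)] = B(e, f) • ι(u ⊗ w) - B(u, w) • ι(e ⊗ f)`; summing, `B(e, f) • ι y` is
`T y • ι(e ⊗ f)` modulo commutators, and `T y = 0` on `ker T`. If `B = 0` then `ι = 0`.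
-/

def commutators {R : Type*} [Ring R] (A : Set R) : Set R :=
  {x | ∃ φ ∈ A, ∃ ψ ∈ A, x = φ * ψ - ψ * φ}

section iotaMap

variable (B : U →ₗ[ℂ] W →ₗ[ℂ] ℂ)

theorem iotaMap_zero : iotaMap (0 : U →ₗ[ℂ] W →ₗ[ℂ] ℂ) = 0 := by
  ext u w x
  simp [iotaMap_apply]

theorem iotaMap_mul_iotaMap (s t : U ⊗[ℂ] W) :
    iotaMap B s * iotaMap B t = iotaMap B (LinearMap.rTensor W (iotaMap B s) t) := by
  induction t using TensorProduct.induction_on with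
  | zero => simp
  | tmul u w =>
    ext x
    simp [iotaMap_apply]
  | add a b ha hb => simp only [map_add, mul_add, ha, hb]

theorem iotaMap_tmul_mul_iotaMap_tmul (u u' : U) (w w' : W) :
    iotaMap B (u ⊗ₜ w) * iotaMap B (u' ⊗ₜ w') = B u' w • iotaMap B (u ⊗ₜ w') := by
  rw [iotaMap_mul_iotaMap, LinearMap.rTensor_tmul, iotaMap_apply, ← smul_tmul', map_smul]

theorem Tmap_rTensor_iotaMap_comm (s t : U ⊗[ℂ] W) :
    Tmap B (LinearMap.rTensor W (iotaMap B s) t) =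
      Tmap B (LinearMap.rTensor W (iotaMap B t) s) := by
  induction s using TensorProduct.induction_on with
  | zero => simp
  | add a b ha hb => simp only [map_add, LinearMap.rTensor_add, LinearMap.add_apply, ha, hb]
  | tmul u w =>
    induction t using TensorProduct.induction_on with
    | zero => simp
    | add a b ha hb => simp only [map_add, LinearMap.rTensor_add, LinearMap.add_apply, ha, hb]
    | tmul u' w' => simp [iotaMap_apply, Tmap_apply, mul_comm]

theorem commutators_range_iotaMap_subset :
    commutators (LinearMap.range (iotaMap B) : Set (Module.End ℂ U)) ⊆
      Submodule.map (iotaMap B) (LinearMap.ker (Tmap B)) := by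
  rintro _ ⟨_, ⟨s, rfl⟩, _, ⟨t, rfl⟩, rfl⟩
  refine ⟨LinearMap.rTensor W (iotaMap B s) t - LinearMap.rTensor W (iotaMap B t) s, ?_, ?_⟩
  · simp [Tmap_rTensor_iotaMap_comm B s t]
  · simp [iotaMap_mul_iotaMap]

theorem smul_iotaMap_sub_mem_span_commutators (e : U) (f : W) (y : U ⊗[ℂ] W) :
    B e f • iotaMap B y - Tmap B y • iotaMap B (e ⊗ₜ f) ∈
      Submodule.span ℂ (commutators (LinearMap.range (iotaMap B) : Set (Module.End ℂ U))) := by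
  let L : U ⊗[ℂ] W →ₗ[ℂ] Module.End ℂ U :=
    B e f • iotaMap B - (Tmap B).smulRight (iotaMap B (e ⊗ₜ f))
  change L y ∈ _
  induction y using TensorProduct.induction_on with
  | zero => simp
  | add a b ha hb => simpa only [map_add] using add_mem ha hb
  | tmul u w =>
    have hcomm : L (u ⊗ₜ w) = iotaMap B (u ⊗ₜ f) * iotaMap B (e ⊗ₜ w) -
        iotaMap B (e ⊗ₜ w) * iotaMap B (u ⊗ₜ f) := by
      simp [L, iotaMap_tmul_mul_iotaMap_tmul, Tmap_apply]
    rw [hcomm]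
    exact Submodule.subset_span ⟨_, ⟨_, rfl⟩, _, ⟨_, rfl⟩, rfl⟩

theorem map_ker_Tmap_le_span_commutators :
    Submodule.map (iotaMap B) (LinearMap.ker (Tmap B)) ≤
      Submodule.span ℂ (commutators (LinearMap.range (iotaMap B) : Set (Module.End ℂ U))) := by
  by_cases hB : ∃ e f, B e f ≠ 0
  · obtain ⟨e, f, hef⟩ := hB
    rintro _ ⟨y, hy, rfl⟩
    have h := smul_iotaMap_sub_mem_span_commutators B e f y
    rw [LinearMap.mem_ker.mp hy, zero_smul, sub_zero] at h
    simpa [hef] using Submodule.smul_mem _ (B e f)⁻¹ h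
  · push Not at hB
    obtain rfl : B = 0 := LinearMap.ext₂ hB
    simp [iotaMap_zero]

end iotaMap

theorem stmt_3_general (B : U →ₗ[ℂ] W →ₗ[ℂ] ℂ) :
    Submodule.span ℂ {x : Module.End ℂ U |
        ∃ φ ∈ LinearMap.range (iotaMap B), ∃ ψ ∈ LinearMap.range (iotaMap B),
          x = φ * ψ - ψ * φ}
      = Submodule.map (iotaMap B) (LinearMap.ker (Tmap B)) :=
  le_antisymm (Submodule.span_le.mpr (commutators_range_iotaMap_subset B))
    (map_ker_Tmap_le_span_commutators B)

/-- For a linear system `(U, W, B)`, the commutator ideal `⁅gl_{U,W}, gl_{U,W}⁆`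
(the span of all commutators of elements in the range of `ι`) equals
`sl_{U,W} = ι(ker T)` as subspaces of `End ℂ U`. -/
theorem stmt_3 (B : U →ₗ[ℂ] W →ₗ[ℂ] ℂ)
    (hB1 : ∀ u : U, (∀ w : W, B u w = 0) → u = 0)
    (hB2 : ∀ w : W, (∀ u : U, B u w = 0) → w = 0) :
    Submodule.span ℂ {x : Module.End ℂ U |
        ∃ φ ∈ LinearMap.range (iotaMap B), ∃ ψ ∈ LinearMap.range (iotaMap B),
          x = φ * ψ - ψ * φ}
      = Submodule.map (iotaMap B) (LinearMap.ker (Tmap B)) :=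
  stmt_3_general B
end

section
/- (Mackey) Let (U, W, B) be a linear system over ℂ in which both U and W have countably infinite dimension. Then there exist bases (u_i)_{i∈ℕ} of U and (w_j)_{j∈ℕ} of W which are dual with respect to B, i.e. B(u_i, w_j) = 1 if i = j and B(u_i, w_j) = 0 if i ≠ j. -/
/-!
Mackey's back-and-forth argument. Enumerate spanning sequences of `U` and `W` and build a
biorthogonal sequence `(u k, w k)` one pair at a time, alternately absorbing the next vector of
`U` and of `W`. To absorb `t : U`, take `t` (or, if it is already covered, any vector outside the
finite span, which exists since `U` is infinite-dimensional) minus its projection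
`∑ i, B t (w i) • u i`; nondegeneracy gives a partner in `W`, which is projected off the `u i` and
normalised. Biorthogonality makes the resulting spanning families linearly independent.
-/

open Submodule Set

theorem exists_seq_of_forall_exists_snoc {α : Type*} {P : ∀ n, (Fin n → α) → Prop}
    (h0 : P 0 Fin.elim0) (hstep : ∀ n (p : Fin n → α), P n p → ∃ a, P (n + 1) (Fin.snoc p a)) :
    ∃ s : ℕ → α, ∀ n, P n fun i => s i := by
  choose next hnext using hstep
  let stage : ∀ n, {p : Fin n → α // P n p} := fun n =>
    Nat.rec ⟨Fin.elim0, h0⟩ (fun n p => ⟨Fin.snoc p.1 (next n p.1 p.2), hnext n p.1 p.2⟩) n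
  have stage_eq (n : ℕ) : (stage n).1 = fun i : Fin n => (stage (i + 1)).1 (Fin.last i) := by
    induction n with
    | zero => funext i; exact i.elim0
    | succ n ih =>
      funext i
      refine Fin.lastCases rfl (fun j => ?_) i
      simp only [stage, Fin.snoc_castSucc, Fin.val_castSucc] at ih ⊢
      exact congrFun ih j
  exact ⟨fun k => (stage (k + 1)).1 (Fin.last k), fun n => stage_eq n ▸ (stage n).2⟩

section

variable {K U W : Type*} [Field K] [AddCommGroup U] [Module K U] [AddCommGroup W] [Module K W]

namespace LinearMap

def IsBiorthogonal {ι : Type*} [DecidableEq ι] (B : U →ₗ[K] W →ₗ[K] K) (u : ι → U) (w : ι → W) :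
    Prop :=
  ∀ i j, B (u i) (w j) = if i = j then 1 else 0

variable {ι : Type*} [DecidableEq ι] {B : U →ₗ[K] W →ₗ[K] K} {u : ι → U} {w : ι → W}

theorem isBiorthogonal_flip : B.flip.IsBiorthogonal w u ↔ B.IsBiorthogonal u w := by
  simp only [IsBiorthogonal, flip_apply]
  exact forall_comm.trans <| forall₂_congr fun i j => by simp only [eq_comm (a := j)]

namespace IsBiorthogonal

theorem linearIndependent (h : B.IsBiorthogonal u w) : LinearIndependent K u := by
  refine linearIndependent_iff'.mpr fun s g hg i hi => ?_
  unfold IsBiorthogonal at h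
  simpa [map_sum, h, Finset.sum_ite_eq', hi] using congrArg (fun x => B x (w i)) hg

theorem apply_sub_sum_eq_zero [Fintype ι] (h : B.IsBiorthogonal u w) (x : U) (j : ι) :
    B (x - ∑ i, B x (w i) • u i) (w j) = 0 := by
  unfold IsBiorthogonal at h
  simp [map_sum, h]

theorem snoc {n : ℕ} {u : Fin n → U} {w : Fin n → W} (h : B.IsBiorthogonal u w) {x : U} {y : W}
    (hx : ∀ j, B x (w j) = 0) (hy : ∀ i, B (u i) y = 0) (hxy : B x y = 1) :
    B.IsBiorthogonal (Fin.snoc u x) (Fin.snoc w y) := by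
  unfold IsBiorthogonal at h
  intro i j
  induction i using Fin.lastCases <;> induction j using Fin.lastCases <;>
    simp [hxy, hx, hy, h, (Fin.castSucc_lt_last _).ne, (Fin.castSucc_lt_last _).ne']

theorem exists_snoc_mem_span (hB : ∀ x, (∀ y, B x y = 0) → x = 0) (hU : ¬Module.Finite K U)
    {n : ℕ} {u : Fin n → U} {w : Fin n → W} (h : B.IsBiorthogonal u w) (t : U) :
    ∃ x y, B.IsBiorthogonal (Fin.snoc u x) (Fin.snoc w y) ∧
      t ∈ span K (Set.range (Fin.snoc u x)) := by
  set S := span K (Set.range u)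
  have hS : S ≠ ⊤ := fun hS => hU ⟨hS ▸ fg_span (Set.finite_range u)⟩
  obtain ⟨t₀, ht₀S, ht⟩ : ∃ t₀ ∉ S, t ∈ span K (insert t₀ (Set.range u)) := by
    by_cases htS : t ∈ S
    · obtain ⟨t₀, ht₀S⟩ := SetLike.exists_not_mem_of_ne_top S hS
      exact ⟨t₀, ht₀S, span_mono (subset_insert _ _) htS⟩
    · exact ⟨t, htS, subset_span (mem_insert _ _)⟩
  set p := ∑ i, B t₀ (w i) • u i
  have hpS : p ∈ S := sum_mem fun i _ => smul_mem _ _ (subset_span (Set.mem_range_self i))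
  set x := t₀ - p
  have hx : ∀ j, B x (w j) = 0 := h.apply_sub_sum_eq_zero t₀
  have hx0 : x ≠ 0 := fun hx0 => ht₀S (sub_eq_zero.mp hx0 ▸ hpS)
  obtain ⟨y₀, hy₀⟩ : ∃ y₀, B x y₀ ≠ 0 := by
    by_contra! H
    exact hx0 (hB x H)
  set y₁ := y₀ - ∑ i, B (u i) y₀ • w i
  have hy₁ : ∀ i, B (u i) y₁ = 0 := (isBiorthogonal_flip.mpr h).apply_sub_sum_eq_zero y₀
  have hxy₁ : B x y₁ = B x y₀ := by simp [y₁, hx]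
  refine ⟨x, (B x y₀)⁻¹ • y₁, h.snoc hx (by simp [hy₁]) (by simp [hxy₁, hy₀]), ?_⟩
  have ht₀ : t₀ ∈ span K (insert x (Set.range u)) := by
    rw [← sub_add_cancel t₀ p]
    exact add_mem (subset_span (mem_insert _ _)) (span_mono (subset_insert _ _) hpS)
  rw [Fin.range_snoc]
  exact span_le.mpr (insert_subset ht₀ ((subset_insert _ _).trans subset_span)) ht

end IsBiorthogonal

theorem isBiorthogonal_of_forall_fin {u : ℕ → U} {w : ℕ → W}
    (h : ∀ n, B.IsBiorthogonal (fun i : Fin n => u i) (fun i : Fin n => w i)) :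
    B.IsBiorthogonal u w := fun i j => by
  simpa [Fin.ext_iff] using h (max i j + 1) ⟨i, by omega⟩ ⟨j, by omega⟩

theorem exists_isBiorthogonal_seq (hB₁ : ∀ x, (∀ y, B x y = 0) → x = 0)
    (hB₂ : ∀ y, (∀ x, B x y = 0) → y = 0) (hU : ¬Module.Finite K U) (hW : ¬Module.Finite K W)
    (t : ℕ → U ⊕ W) :
    ∃ (u : ℕ → U) (w : ℕ → W), B.IsBiorthogonal u w ∧
      ∀ k, Sum.elim (· ∈ span K (Set.range u)) (· ∈ span K (Set.range w)) (t k) := by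
  let Covers {n : ℕ} (p : Fin n → U × W) : U ⊕ W → Prop :=
    Sum.elim (· ∈ span K (Set.range (Prod.fst ∘ p))) (· ∈ span K (Set.range (Prod.snd ∘ p)))
  have covers_snoc {n : ℕ} (p : Fin n → U × W) (q : U × W) (z : U ⊕ W) (hz : Covers p z) :
      Covers (Fin.snoc p q) z := by
    rcases z with a | b <;>
      refine span_mono ?_ hz <;> simp only [Fin.comp_snoc, Fin.range_snoc, Set.subset_insert]
  obtain ⟨s, hs⟩ := exists_seq_of_forall_exists_snoc
    (P := fun n p => B.IsBiorthogonal (Prod.fst ∘ p) (Prod.snd ∘ p) ∧ ∀ k < n, Covers p (t k))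
    ⟨fun i => i.elim0, fun k hk => absurd hk k.not_lt_zero⟩ <| by
      rintro n p ⟨hp, hcov⟩
      have hnew : ∃ q, B.IsBiorthogonal (Prod.fst ∘ Fin.snoc p q) (Prod.snd ∘ Fin.snoc p q) ∧
          Covers (Fin.snoc p q) (t n) := by
        simp only [Covers, Fin.comp_snoc]
        rcases t n with a | b
        · obtain ⟨x, y, hxy, ha⟩ := hp.exists_snoc_mem_span hB₁ hU a
          exact ⟨(x, y), hxy, ha⟩
        · obtain ⟨y, x, hyx, hb⟩ := (isBiorthogonal_flip.mpr hp).exists_snoc_mem_span hB₂ hW b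
          exact ⟨(x, y), isBiorthogonal_flip.mp hyx, hb⟩
      obtain ⟨q, hq, hqn⟩ := hnew
      refine ⟨q, hq, fun k hk => ?_⟩
      rcases (Nat.lt_succ_iff.mp hk).lt_or_eq with hk | rfl
      exacts [covers_snoc p q _ (hcov k hk), hqn]
  refine ⟨fun i => (s i).1, fun i => (s i).2, isBiorthogonal_of_forall_fin fun n => (hs n).1,
    fun k => ?_⟩
  have hk := (hs (k + 1)).2 k k.lt_succ_self
  generalize t k = z at hk ⊢
  rcases z with a | b <;> exact span_mono (Set.range_comp_subset_range _ _) hk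

theorem exists_span_range_eq_top_of_rank_le_aleph0 (h : Module.rank K U ≤ Cardinal.aleph0) :
    ∃ e : ℕ → U, span K (Set.range e) = ⊤ := by
  let b := Module.Basis.ofVectorSpace K U
  have : Countable (Module.Basis.ofVectorSpaceIndex K U) :=
    Cardinal.mk_le_aleph0_iff.mp (b.mk_eq_rank'' ▸ h)
  obtain ⟨e, he⟩ := ((Set.countable_range b).insert 0).exists_eq_range (Set.insert_nonempty _ _)
  exact ⟨e, by rw [← he, span_insert_zero, b.span_eq]⟩

theorem exists_basis_isBiorthogonal (hB₁ : ∀ x, (∀ y, B x y = 0) → x = 0)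
    (hB₂ : ∀ y, (∀ x, B x y = 0) → y = 0) (hU : Module.rank K U = Cardinal.aleph0)
    (hW : Module.rank K W = Cardinal.aleph0) :
    ∃ (bu : Module.Basis ℕ K U) (bw : Module.Basis ℕ K W), B.IsBiorthogonal bu bw := by
  obtain ⟨e, he⟩ := exists_span_range_eq_top_of_rank_le_aleph0 hU.le
  obtain ⟨f, hf⟩ := exists_span_range_eq_top_of_rank_le_aleph0 hW.le
  obtain ⟨u, w, huw, hcov⟩ := exists_isBiorthogonal_seq hB₁ hB₂
    (fun h => (Module.rank_lt_aleph0_iff.mpr h).ne hU)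
    (fun h => (Module.rank_lt_aleph0_iff.mpr h).ne hW)
    (Sum.map e f ∘ Equiv.natSumNatEquivNat.symm)
  have hu : ⊤ ≤ span K (Set.range u) := he ▸ span_le.mpr (by
    rintro _ ⟨m, rfl⟩
    simpa using hcov (Equiv.natSumNatEquivNat (.inl m)))
  have hw : ⊤ ≤ span K (Set.range w) := hf ▸ span_le.mpr (by
    rintro _ ⟨m, rfl⟩
    simpa using hcov (Equiv.natSumNatEquivNat (.inr m)))
  refine ⟨.mk huw.linearIndependent hu, .mk (isBiorthogonal_flip.mpr huw).linearIndependent hw, ?_⟩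
  simpa only [Module.Basis.coe_mk] using huw

end LinearMap

end

/-- (Mackey) A linear system `(U, W, B)` over `ℂ` with `U` and `W` of countably infinite
dimension admits a pair of dual bases: bases `(u_i)_{i∈ℕ}` of `U` and `(w_j)_{j∈ℕ}` of `W`
with `B (u_i) (w_j) = δ_{ij}`. -/
theorem stmt_4 {U W : Type*} [AddCommGroup U] [Module ℂ U] [AddCommGroup W] [Module ℂ W]
    (B : U →ₗ[ℂ] W →ₗ[ℂ] ℂ)
    (hB1 : ∀ u : U, (∀ w : W, B u w = 0) → u = 0)
    (hB2 : ∀ w : W, (∀ u : U, B u w = 0) → w = 0)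
    (hU : Module.rank ℂ U = Cardinal.aleph0)
    (hW : Module.rank ℂ W = Cardinal.aleph0) :
    ∃ (bu : Module.Basis ℕ ℂ U) (bw : Module.Basis ℕ ℂ W),
      ∀ i j : ℕ, B (bu i) (bw j) = if i = j then 1 else 0 :=
  LinearMap.exists_basis_isBiorthogonal hB1 hB2 hU hW
end

section
/- Let (U, W, B) be a linear system over ℂ. If X ⊆ U is a subspace invariant under sl_{U,W}, i.e. ι(t)(x) ∈ X for every t ∈ ker T and every x ∈ X, then X = 0 or X = U. (That is, U is a simple sl_{U,W}-module.) -/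
open TensorProduct

variable {U W : Type*} [AddCommGroup U] [Module ℂ U] [AddCommGroup W] [Module ℂ W]

/-! If `x ∈ X` and `B x w ≠ 0`, the traceless element `u ⊗ w - (B u w / B x w) • (x ⊗ w)` sends
`x` to `B x w • u - B u w • x`, so `X` contains every `u`; nondegeneracy supplies such a `w` for
any nonzero `x`. -/

section

variable (B : U →ₗ[ℂ] W →ₗ[ℂ] ℂ) {x : U} {w : W}

theorem tmul_sub_smul_tmul_mem_ker_Tmap (hw : B x w ≠ 0) (u : U) :
    u ⊗ₜ[ℂ] w - (B u w / B x w) • (x ⊗ₜ[ℂ] w) ∈ LinearMap.ker (Tmap B) := by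
  simp only [LinearMap.mem_ker, map_sub, map_smul, Tmap_apply, smul_eq_mul,
    div_mul_cancel₀ _ hw, sub_self]

theorem iotaMap_tmul_sub_smul_tmul_apply (hw : B x w ≠ 0) (u : U) :
    iotaMap B (u ⊗ₜ[ℂ] w - (B u w / B x w) • (x ⊗ₜ[ℂ] w)) x = B x w • u - B u w • x := by
  simp only [map_sub, map_smul, LinearMap.sub_apply, LinearMap.smul_apply, iotaMap_apply,
    smul_smul, div_mul_cancel₀ _ hw]

theorem eq_top_of_iotaMap_invariant {X : Submodule ℂ U}
    (hX : ∀ t ∈ LinearMap.ker (Tmap B), ∀ x ∈ X, iotaMap B t x ∈ X)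
    (hxX : x ∈ X) (hw : B x w ≠ 0) : X = ⊤ := by
  refine Submodule.eq_top_iff'.2 fun u => ?_
  have hdiff : B x w • u - B u w • x ∈ X := by
    rw [← iotaMap_tmul_sub_smul_tmul_apply B hw u]
    exact hX _ (tmul_sub_smul_tmul_mem_ker_Tmap B hw u) x hxX
  have hscaled : B x w • u ∈ X := by
    simpa using X.add_mem hdiff (X.smul_mem (B u w) hxX)
  exact (X.smul_mem_iff hw).1 hscaled

end

theorem stmt_11_general (B : U →ₗ[ℂ] W →ₗ[ℂ] ℂ)
    (hB1 : ∀ u : U, (∀ w : W, B u w = 0) → u = 0)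
    (X : Submodule ℂ U)
    (hX : ∀ t ∈ LinearMap.ker (Tmap B), ∀ x ∈ X, iotaMap B t x ∈ X) :
    X = ⊥ ∨ X = ⊤ := by
  refine or_iff_not_imp_left.2 fun hbot => ?_
  obtain ⟨x, hxX, hx0⟩ := (Submodule.ne_bot_iff X).1 hbot
  obtain ⟨w, hw⟩ : ∃ w, B x w ≠ 0 := by
    by_contra! h
    exact hx0 (hB1 x h)
  exact eq_top_of_iotaMap_invariant B hX hxX hw

/-- For a linear system `(U, W, B)`, the tautological `sl_{U,W}`-module `U` is simple:
any subspace of `U` stable under `ι(ker T)` is `⊥` or `⊤`. -/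
theorem stmt_11 (B : U →ₗ[ℂ] W →ₗ[ℂ] ℂ)
    (hB1 : ∀ u : U, (∀ w : W, B u w = 0) → u = 0)
    (hB2 : ∀ w : W, (∀ u : U, B u w = 0) → w = 0)
    (X : Submodule ℂ U)
    (hX : ∀ t ∈ LinearMap.ker (Tmap B), ∀ x ∈ X, iotaMap B t x ∈ X) :
    X = ⊥ ∨ X = ⊤ :=
  stmt_11_general B hB1 X hX
end

section
/- Let (U, W, B) be a linear system over ℂ with 2 ≤ Module.rank ℂ W. Let X ⊆ U* be a nonzero subspace invariant under the dual action of sl_{U,W}, i.e. ξ ∘ ι(t) ∈ X for every ξ ∈ X and every t ∈ ker T. Then W̃ := j_W(W) ⊆ X. (Hence W̃ is the socle of the sl_{U,W}-module U*.) -/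
open TensorProduct

variable {U W : Type*} [AddCommGroup U] [Module ℂ U] [AddCommGroup W] [Module ℂ W]

/-!
For `w ∈ W` and `ξ ∈ X`, each `u` with `B u w = 0` gives `u ⊗ w ∈ ker T`, and
`ξ ∘ ι(u ⊗ w) = ξ u • B(·, w)`. So `B(·, w) ∈ X` unless `ξ` vanishes on `ker B(·, w)`;
in that case `ξ` is a multiple of `B(·, w)`, and a nonzero one if `ξ ≠ 0`.
-/

theorem Module.Dual.exists_smul_eq_of_ker_le {K V : Type*} [Field K] [AddCommGroup V]
    [Module K V] {ξ η : Module.Dual K V} (h : LinearMap.ker η ≤ LinearMap.ker ξ) :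
    ∃ a : K, a • η = ξ := by
  have hspan := mem_span_of_iInf_ker_le_ker (L := fun _ : Unit ↦ η) (K := ξ)
    (by rwa [iInf_const])
  rwa [Set.range_const, Submodule.mem_span_singleton] at hspan

theorem Module.Dual.mem_of_smul_mem {K V : Type*} [Field K] [AddCommGroup V] [Module K V]
    {X : Submodule K (Module.Dual K V)} {ξ η : Module.Dual K V} (hξX : ξ ∈ X) (hξ : ξ ≠ 0)
    (h : ∀ u ∈ LinearMap.ker η, ξ u • η ∈ X) : η ∈ X := by
  by_cases hker : LinearMap.ker η ≤ LinearMap.ker ξ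
  · obtain ⟨a, rfl⟩ := Module.Dual.exists_smul_eq_of_ker_le hker
    exact (X.smul_mem_iff (left_ne_zero_of_smul hξ)).mp hξX
  · obtain ⟨u, hu, hξu⟩ := Set.not_subset.mp hker
    exact (X.smul_mem_iff hξu).mp (h u hu)

theorem tmul_mem_ker_Tmap {B : U →ₗ[ℂ] W →ₗ[ℂ] ℂ} {u : U} {w : W} (h : B u w = 0) :
    u ⊗ₜ w ∈ LinearMap.ker (Tmap B) := h

theorem dualMap_iotaMap_tmul (B : U →ₗ[ℂ] W →ₗ[ℂ] ℂ) (ξ : Module.Dual ℂ U) (u : U) (w : W) :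
    (iotaMap B (u ⊗ₜ w)).dualMap ξ = ξ u • B.flip w := by
  ext x
  simp only [LinearMap.dualMap_apply, iotaMap_apply, map_smul, smul_eq_mul,
    LinearMap.smul_apply, LinearMap.flip_apply, mul_comm]

theorem stmt_12_general (B : U →ₗ[ℂ] W →ₗ[ℂ] ℂ)
    (X : Submodule ℂ (Module.Dual ℂ U)) (hne : X ≠ ⊥)
    (hX : ∀ ξ ∈ X, ∀ t ∈ LinearMap.ker (Tmap B), (iotaMap B t).dualMap ξ ∈ X) :
    LinearMap.range B.flip ≤ X := by
  obtain ⟨ξ, hξX, hξ⟩ := Submodule.exists_mem_ne_zero_of_ne_bot hne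
  rintro _ ⟨w, rfl⟩
  refine Module.Dual.mem_of_smul_mem hξX hξ fun u hu ↦ ?_
  rw [← dualMap_iotaMap_tmul]
  exact hX ξ hξX _ (tmul_mem_ker_Tmap hu)

/-- For a linear system `(U, W, B)` with `2 ≤ dim W`: any nonzero subspace `X ⊆ U*`
stable under the dual action of `sl_{U,W}` (i.e. under `ξ ↦ ξ ∘ ι(t)` for `t ∈ ker T`)
contains `W̃ = range B.flip`.  Hence `W̃` is the socle of the `sl_{U,W}`-module `U*`. -/
theorem stmt_12 (B : U →ₗ[ℂ] W →ₗ[ℂ] ℂ)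
    (hB1 : ∀ u : U, (∀ w : W, B u w = 0) → u = 0)
    (hB2 : ∀ w : W, (∀ u : U, B u w = 0) → w = 0)
    (hrank : 2 ≤ Module.rank ℂ W)
    (X : Submodule ℂ (Module.Dual ℂ U)) (hne : X ≠ ⊥)
    (hX : ∀ ξ ∈ X, ∀ t ∈ LinearMap.ker (Tmap B), (iotaMap B t).dualMap ξ ∈ X) :
    LinearMap.range B.flip ≤ X :=
  stmt_12_general B X hne hX
end
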